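/- Let (D_k) be a sequence of downward-closed subsets of ℕ^d with D_{k+1} ⊆ D_k for all k. If D_{k+1} = D_k for some k defined via U_k = upward closure of χ(T(Δ^{≤k})) ∪ V₀ and D_k = ℕ^d \ U_k, then T(Δ^*) = T(Δ^{≤k}): that is, once the chain stabilizes at step k, the set of transfer flows of all transition sequences is already captured by sequences of length at most k. -/

import Mathlib

/-- ℕ extended with an extra element `#` (represented by `none`),
which is an identity for addition and incomparable with integers. -/
abbrev NS := Option ℕ

def NS.sharp : NS := none

def NS.add : NS → NS → NS
  | none, x => x
  | some a, none => some a
  | some a, some b => some (a + b)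

instance : Add NS := ⟨NS.add⟩
instance : Zero NS := ⟨none⟩

instance : AddCommMonoid NS where
  add_assoc a b c := by
    show NS.add (NS.add a b) c = NS.add a (NS.add b c)
    cases a <;> cases b <;> cases c <;> simp [NS.add, Nat.add_assoc]
  zero_add a := by cases a <;> rfl
  add_zero a := by cases a <;> rfl
  add_comm a b := by
    show NS.add a b = NS.add b a
    cases a <;> cases b <;> simp [NS.add, Nat.add_comm]
  nsmul := nsmulRec

/-- The order on `NS`: `#` is only comparable with `#`. -/
def NS.le : NS → NS → Prop
  | none, none => True
  | some a, some b => a ≤ b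
  | _, _ => False

def NS.lt (x y : NS) : Prop := NS.le x y ∧ x ≠ y

/-- A transfer flow: an agent part `f` and a control part `(src, dst)`. -/
structure TF (Q L : Type) where
  f : Q → Q → NS
  src : L
  dst : L

/-- The order `⪯` on transfer flows. -/
def TF.le {Q L : Type} (t1 t2 : TF Q L) : Prop :=
  t1.src = t2.src ∧ t1.dst = t2.dst ∧ ∀ q q', NS.le (t1.f q q') (t2.f q q')

/-- The product `tf1 ⊗ tf2` of two transfer flows. -/
def TF.prod {Q L : Type} [Fintype Q] (t1 t2 : TF Q L) : Set (TF Q L) :=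
  { t | t1.dst = t2.src ∧ t.src = t1.src ∧ t.dst = t2.dst ∧
    ∃ H : Q → Q → Q → NS,
      (∀ q1 q3, (∑ q2, H q1 q2 q3) = t.f q1 q3) ∧
      (∀ q1 q2, NS.le (t1.f q1 q2) (∑ q3, H q1 q2 q3)) ∧
      (∀ q2 q3, NS.le (t2.f q2 q3) (∑ q1, H q1 q2 q3)) }

/-- The weight of a transfer flow: `#` contributes nothing. -/
def TF.weight {Q L : Type} [Fintype Q] (t : TF Q L) : ℕ :=
  ∑ q, ∑ q', (t.f q q').getD 0

/-- Minimality with respect to `⪯` within a set of transfer flows. -/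
def MinimalIn {Q L : Type} (S : Set (TF Q L)) (t : TF Q L) : Prop :=
  t ∈ S ∧ ∀ t' ∈ S, TF.le t' t → t' = t
/-- An immediate observation transition `(q1, q2) → (q1, q3)`, written
`q2 --q1--> q3`: an agent in `src` observes an agent in `obs` and moves
to `dst`. -/
structure IOTrans (Q : Type) where
  obs : Q
  src : Q
  dst : Q

/-- One step of the protocol using transition `t = (q1,q2) → (q1,q3)`:
one agent moves from `t.src` to `t.dst` while observing an agent in `t.obs`. -/
def ProtStep {Q : Type} [DecidableEq Q] (t : IOTrans Q) (γ γ' : Q → ℕ) : Prop :=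
  1 ≤ γ t.obs ∧ 1 ≤ γ t.src ∧ (t.obs = t.src → 2 ≤ γ t.obs) ∧
  ∀ q, γ' q = γ q - (if q = t.src then 1 else 0) + (if q = t.dst then 1 else 0)

/-- `c1 →tf c2`: a step from configuration `c1` to `c2` following a
transfer flow `tf`, via a step witness `g ≥ f`. -/
def FlowStep {Q L : Type} [Fintype Q] (tf : TF Q L) (c1 c2 : (Q → ℕ) × L) : Prop :=
  c1.2 = tf.src ∧ c2.2 = tf.dst ∧
  ∃ g : Q → Q → NS,
    (∀ q q', NS.le (tf.f q q') (g q q')) ∧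
    (∀ q, (some (c1.1 q) : NS) = ∑ q', g q q') ∧
    (∀ q, (some (c2.1 q) : NS) = ∑ q', g q' q)

/-- The set `T(t)` of transfer flows associated with a transition
`t = (q1,q2) → (q1,q3)` of the IOPP, where `Tr` is the transition function of
the deterministic Rabin automaton. -/
def Tset {Q L : Type} [DecidableEq Q] (Tr : L → IOTrans Q → L) (t : IOTrans Q) :
    Set (TF Q L) :=
  { tf | Tr tf.src t = tf.dst ∧
    ((t.obs ≠ t.src ∨ t.obs ≠ t.dst) →
      NS.le (some 1) (tf.f t.obs t.obs) ∧ NS.le (some 1) (tf.f t.src t.dst)) ∧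
    ((t.obs = t.src ∧ t.obs = t.dst) → NS.le (some 2) (tf.f t.obs t.obs)) ∧
    (∀ q, q ≠ t.obs → (q, q) ≠ (t.src, t.dst) → NS.le (some 0) (tf.f q q)) ∧
    (∀ q q', q ≠ q' → (q, q') ≠ (t.src, t.dst) → tf.f q q' = NS.sharp) }

/-- The product extended to sets of transfer flows. -/
def setProd {Q L : Type} [Fintype Q] (F F' : Set (TF Q L)) : Set (TF Q L) :=
  ⋃ t1 ∈ F, ⋃ t2 ∈ F', TF.prod t1 t2

/-- `T(ε)`: transfer flows of the empty sequence. -/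
def Teps {Q L : Type} : Set (TF Q L) :=
  { tf | tf.src = tf.dst ∧ (∀ q, tf.f q q ≠ NS.sharp) ∧
    ∀ q q', q ≠ q' → tf.f q q' = NS.sharp }

/-- `T(w)` for a word `w = t1 … tk`: the product `T(t1) ⊗ … ⊗ T(tk)`. -/
def Tword {Q L : Type} [Fintype Q] [DecidableEq Q] (Tr : L → IOTrans Q → L) :
    List (IOTrans Q) → Set (TF Q L)
  | [] => Teps
  | t :: w => setProd (Tset Tr t) (Tword Tr w)

/-- `T(Δ^{≤k})`: transfer flows of sequences of at most `k` transitions. -/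
def TBounded {Q L : Type} [Fintype Q] [DecidableEq Q] (Tr : L → IOTrans Q → L)
    (k : ℕ) : Set (TF Q L) :=
  ⋃ w ∈ { w : List (IOTrans Q) | w.length ≤ k }, Tword Tr w

/-- `T(Δ^*)`: transfer flows of all finite sequences of transitions. -/
def TStar {Q L : Type} [Fintype Q] [DecidableEq Q] (Tr : L → IOTrans Q → L) :
    Set (TF Q L) :=
  ⋃ w : List (IOTrans Q), Tword Tr w

/-- Vectors of `ℕ^d` with `d = |Q|² + 2`: one coordinate per pair of states,
plus two extra coordinates. -/
abbrev Vec (Q : Type) := ((Q × Q) ⊕ Fin 2) → ℕ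

/-- `N = |L|² · 2^{|Q|²}`. -/
def Ncard (Q L : Type) [Fintype Q] [Fintype L] : ℕ :=
  (Fintype.card L) ^ 2 * 2 ^ ((Fintype.card Q) ^ 2)

/-- The set `S` of `#`-positions of an agent part. -/
def sharpPos {Q : Type} (f : Q → Q → NS) : Q → Q → Bool :=
  fun q q' => (f q q').isNone

/-- The encoding `χ` of a transfer flow into sets of vectors of `ℕ^d`, given a
map `θ` from pairs of control locations and `#`-position sets to `{1,…,N}`:
coordinates at pairs `(q,q')` with `f(q,q') ≠ #` carry `f(q,q')`, the other
such coordinates are unconstrained, and the two last coordinates are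
`θ(ℓ,ℓ',S)` and `N + 1 − θ(ℓ,ℓ',S)`. -/
def chi {Q L : Type} (N : ℕ) (θ : L × L × (Q → Q → Bool) → ℕ) (tf : TF Q L) :
    Set (Vec Q) :=
  { v | (∀ q q' n, tf.f q q' = some n → v (Sum.inl (q, q')) = n) ∧
    v (Sum.inr 0) = θ (tf.src, tf.dst, sharpPos tf.f) ∧
    v (Sum.inr 1) = N + 1 - θ (tf.src, tf.dst, sharpPos tf.f) }

/-- The image of a set of transfer flows under the encoding `χ`. -/
def chiSet {Q L : Type} (N : ℕ) (θ : L × L × (Q → Q → Bool) → ℕ)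
    (F : Set (TF Q L)) : Set (Vec Q) :=
  ⋃ tf ∈ F, chi N θ tf

/-- `V₀`: vectors whose last two components are `(N+1, 0)` or `(0, N+1)`. -/
def V0 {Q : Type} (N : ℕ) : Set (Vec Q) :=
  { v | (v (Sum.inr 0) = N + 1 ∧ v (Sum.inr 1) = 0) ∨
        (v (Sum.inr 0) = 0 ∧ v (Sum.inr 1) = N + 1) }

/-- Upward closure with respect to the componentwise order on `ℕ^d`. -/
def upClosure {Q : Type} (A : Set (Vec Q)) : Set (Vec Q) :=
  { v | ∃ u ∈ A, ∀ i, u i ≤ v i }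

/-- `U_k`: the upward closure of `χ(T(Δ^{≤k})) ∪ V₀`. -/
def Uset {Q L : Type} [Fintype Q] [DecidableEq Q] (N : ℕ)
    (θ : L × L × (Q → Q → Bool) → ℕ) (Tr : L → IOTrans Q → L) (k : ℕ) :
    Set (Vec Q) :=
  upClosure (chiSet N θ (TBounded Tr k) ∪ V0 N)

/-- `D_k := ℕ^d \ U_k`. -/
def Dset {Q L : Type} [Fintype Q] [DecidableEq Q] (N : ℕ)
    (θ : L × L × (Q → Q → Bool) → ℕ) (Tr : L → IOTrans Q → L) (k : ℕ) :
    Set (Vec Q) :=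
  (Uset N θ Tr k)ᶜ

/-! Each `T(w)` is upward closed for `⪯`, since the witness of a product can absorb any increase
of the product. The encoding `χ` reflects `⪯`, and `V₀` lies below no encoding, so `U_{k+1} = U_k`
forces `T(Δ^{≤k+1}) ⊆ T(Δ^{≤k})`. As `T(Δ^{≤j+1}) = T(ε) ∪ ⋃ₜ T(t) ⊗ T(Δ^{≤j})`, the chain
`T(Δ^{≤j})` is then constant from `k` on. -/

namespace NS

lemma le_refl : ∀ a : NS, NS.le a a
  | none => trivial
  | some n => Nat.le_refl n

lemma le_trans {a b c : NS} (hab : NS.le a b) (hbc : NS.le b c) : NS.le a c := by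
  cases a <;> cases b <;> cases c <;> simp_all [NS.le]
  omega

lemma eq_none_of_none_le : ∀ {a : NS}, NS.le none a → a = none
  | none, _ => rfl

lemma add_le_add {a b c d : NS} (hab : NS.le a b) (hcd : NS.le c d) :
    NS.le (a + c) (b + d) := by
  change NS.le (NS.add a c) (NS.add b d)
  cases a <;> cases b <;> cases c <;> cases d <;> simp_all [NS.le, NS.add]
  omega

lemma le_add_right {a d : NS} (h : a = none → d = none) : NS.le a (a + d) := by
  change NS.le a (NS.add a d)
  cases a <;> cases d <;> simp_all [NS.le, NS.add]

lemma sum_le_sum {ι : Type*} (s : Finset ι) {f g : ι → NS}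
    (h : ∀ i ∈ s, NS.le (f i) (g i)) : NS.le (∑ i ∈ s, f i) (∑ i ∈ s, g i) := by
  classical
  induction s using Finset.induction_on with
  | empty => exact le_refl _
  | insert i s hi ih =>
    rw [Finset.sum_insert hi, Finset.sum_insert hi]
    exact add_le_add (h i (s.mem_insert_self i)) (ih fun j hj => h j (s.mem_insert_of_mem hj))

/-- A sum can be raised to any larger value by raising its summands: the whole increase is put
on one summand that is not `#`. -/
lemma exists_le_sum_eq {ι : Type*} [Fintype ι] (f : ι → NS) {b : NS}
    (h : NS.le (∑ i, f i) b) : ∃ g : ι → NS, (∀ i, NS.le (f i) (g i)) ∧ ∑ i, g i = b := by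
  classical
  rcases hsum : ∑ i, f i with _ | n
  · rw [hsum] at h
    exact ⟨f, fun i => le_refl (f i), hsum.trans (eq_none_of_none_le h).symm⟩
  obtain ⟨i, hi⟩ : ∃ i, f i ≠ none := by
    by_contra! hnone
    rw [Finset.sum_eq_zero fun i _ => hnone i] at hsum
    cases hsum
  obtain ⟨m, rfl⟩ : ∃ m, b = some m := by
    rw [hsum] at h
    cases b <;> simp_all [NS.le]
  refine ⟨fun j => f j + (Pi.single i (some (m - n)) : ι → NS) j, fun j => ?_, ?_⟩
  · by_cases hj : j = i
    · subst hj
      exact le_add_right fun h => absurd h hi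
    · simpa [Pi.single_apply, hj] using le_refl (f j)
  · rw [hsum] at h
    rw [Finset.sum_add_distrib, hsum, Fintype.sum_pi_single']
    change some (n + (m - n)) = some m
    simp only [NS.le] at h
    rw [Nat.add_sub_cancel' h]

end NS

namespace TF

variable {Q L : Type}

def UpwardClosed (S : Set (TF Q L)) : Prop :=
  ∀ ⦃t t'⦄, t ∈ S → TF.le t t' → t' ∈ S

lemma prod_upwardClosed [Fintype Q] (t1 t2 : TF Q L) : UpwardClosed (TF.prod t1 t2) := by
  rintro t t' ⟨h12, hsrc, hdst, H, hsum, hle1, hle2⟩ ⟨hs, hd, hf⟩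
  have hraise : ∀ q1 q3, ∃ G : Q → NS,
      (∀ q2, NS.le (H q1 q2 q3) (G q2)) ∧ ∑ q2, G q2 = t'.f q1 q3 := fun q1 q3 =>
    NS.exists_le_sum_eq _ ((hsum q1 q3).symm ▸ hf q1 q3)
  choose G hGle hGsum using hraise
  refine ⟨h12, hs ▸ hsrc, hd ▸ hdst, fun q1 q2 q3 => G q1 q3 q2, hGsum, fun q1 q2 => ?_,
    fun q2 q3 => ?_⟩
  · exact NS.le_trans (hle1 q1 q2) (NS.sum_le_sum _ fun q3 _ => hGle q1 q3 q2)
  · exact NS.le_trans (hle2 q2 q3) (NS.sum_le_sum _ fun q1 _ => hGle q1 q3 q2)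

end TF

open TF

section UpwardClosure

variable {Q L : Type}

lemma Tset_upwardClosed [DecidableEq Q] (Tr : L → IOTrans Q → L) (t : IOTrans Q) :
    UpwardClosed (Tset (Q := Q) Tr t) := by
  rintro tf tf' ⟨hTr, hmove, hloop, hidle, hsharp⟩ ⟨hs, hd, hf⟩
  refine ⟨hs ▸ hd ▸ hTr, fun hne => ?_, fun heq => NS.le_trans (hloop heq) (hf _ _),
    fun q hq hq' => NS.le_trans (hidle q hq hq') (hf _ _),
    fun q q' hne hq => NS.eq_none_of_none_le (hsharp q q' hne hq ▸ hf q q' : NS.le NS.sharp _)⟩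
  obtain ⟨hobs, hsd⟩ := hmove hne
  exact ⟨NS.le_trans hobs (hf _ _), NS.le_trans hsd (hf _ _)⟩

lemma Teps_upwardClosed : UpwardClosed (Teps (Q := Q) (L := L)) := by
  rintro tf tf' ⟨hsd, hdiag, hoff⟩ ⟨hs, hd, hf⟩
  refine ⟨hs ▸ hd ▸ hsd, fun q hq => hdiag q ?_, fun q q' hne =>
    NS.eq_none_of_none_le (hoff q q' hne ▸ hf q q' : NS.le NS.sharp _)⟩
  have hle := hf q q
  rw [hq] at hle
  cases h : tf.f q q <;> simp_all [NS.le, NS.sharp]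

lemma setProd_upwardClosed [Fintype Q] (F F' : Set (TF Q L)) :
    UpwardClosed (setProd F F') := by
  intro t t' ht hle
  simp only [setProd, Set.mem_iUnion] at ht ⊢
  obtain ⟨t1, ht1, t2, ht2, hprod⟩ := ht
  exact ⟨t1, ht1, t2, ht2, prod_upwardClosed t1 t2 hprod hle⟩

variable [Fintype Q] [DecidableEq Q] (Tr : L → IOTrans Q → L)

lemma Tword_upwardClosed : ∀ w : List (IOTrans Q), UpwardClosed (Tword Tr w)
  | [] => Teps_upwardClosed
  | _ :: _ => setProd_upwardClosed _ _

lemma TBounded_upwardClosed (k : ℕ) : UpwardClosed (TBounded Tr k) := by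
  intro t t' ht hle
  simp only [TBounded, Set.mem_iUnion] at ht ⊢
  obtain ⟨w, hw, ht⟩ := ht
  exact ⟨w, hw, Tword_upwardClosed Tr w ht hle⟩

end UpwardClosure

section Encoding

variable {Q L : Type} {N : ℕ} {θ : L × L × (Q → Q → Bool) → ℕ}

lemma chi_nonempty (tf : TF Q L) : (chi N θ tf).Nonempty := by
  refine ⟨Sum.elim (fun p => (tf.f p.1 p.2).getD 0) ![θ (tf.src, tf.dst, sharpPos tf.f),
    N + 1 - θ (tf.src, tf.dst, sharpPos tf.f)], fun q q' n hn => ?_, rfl, rfl⟩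
  simp [hn]

lemma not_le_of_mem_V0_of_mem_chi (hθ : ∀ x, θ x ∈ Set.Icc 1 N) {tf : TF Q L} {u v : Vec Q}
    (hu : u ∈ V0 N) (hv : v ∈ chi N θ tf) : ¬ ∀ i, u i ≤ v i := by
  intro hle
  have h0 := hle (Sum.inr 0)
  have h1 := hle (Sum.inr 1)
  obtain ⟨-, hv0, hv1⟩ := hv
  obtain ⟨hθ1, hθN⟩ := hθ (tf.src, tf.dst, sharpPos tf.f)
  rcases hu with ⟨hu0, -⟩ | ⟨-, hu1⟩ <;> omega

/-- The last two coordinates `θ` and `N + 1 - θ` can only grow together if `θ` stays the same;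
then the injectivity of `θ` fixes the control part and the `#`-positions. -/
lemma TF.le_of_mem_chi_of_le (hθ : ∀ x, θ x ≤ N + 1) (hinj : θ.Injective) {tf tf' : TF Q L}
    {u v : Vec Q} (hu : u ∈ chi N θ tf) (hv : v ∈ chi N θ tf') (hle : ∀ i, u i ≤ v i) :
    TF.le tf tf' := by
  obtain ⟨huf, hu0, hu1⟩ := hu
  obtain ⟨hvf, hv0, hv1⟩ := hv
  have h0 := hle (Sum.inr 0)
  have h1 := hle (Sum.inr 1)
  have hθu := hθ (tf.src, tf.dst, sharpPos tf.f)
  have hθv := hθ (tf'.src, tf'.dst, sharpPos tf'.f)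
  have hθeq : θ (tf.src, tf.dst, sharpPos tf.f) = θ (tf'.src, tf'.dst, sharpPos tf'.f) := by
    omega
  obtain ⟨hsrc, hdst, hsharp⟩ : _ ∧ _ ∧ _ := by simpa only [Prod.mk.injEq] using hinj hθeq
  refine ⟨hsrc, hdst, fun q q' => ?_⟩
  have hnone : (tf.f q q').isNone = (tf'.f q q').isNone := congrFun (congrFun hsharp q) q'
  cases h : tf.f q q' <;> cases h' : tf'.f q q' <;> simp only [h, h'] at hnone ⊢
  · trivial
  · cases hnone
  · cases hnone
  · exact huf q q' _ h ▸ hvf q q' _ h' ▸ hle (Sum.inl (q, q'))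

lemma subset_of_chiSet_subset_upClosure (hθ : ∀ x, θ x ∈ Set.Icc 1 N) (hinj : θ.Injective)
    {F G : Set (TF Q L)} (hG : UpwardClosed G)
    (hFG : chiSet N θ F ⊆ upClosure (chiSet N θ G ∪ V0 N)) : F ⊆ G := by
  intro tf htf
  obtain ⟨v, hv⟩ := chi_nonempty (N := N) (θ := θ) tf
  obtain ⟨u, hu, hle⟩ := hFG (Set.mem_biUnion htf hv)
  rcases hu with hu | hu
  · obtain ⟨tf', htf', hu⟩ := Set.mem_iUnion₂.mp hu
    exact hG htf' (TF.le_of_mem_chi_of_le (fun x => (hθ x).2.trans N.le_succ) hinj hu hv hle)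
  · exact absurd hle (not_le_of_mem_V0_of_mem_chi hθ hu hv)

lemma chiSet_subset_Uset [Fintype Q] [DecidableEq Q] (Tr : L → IOTrans Q → L) (k : ℕ) :
    chiSet N θ (TBounded Tr k) ⊆ Uset N θ Tr k :=
  fun v hv => ⟨v, Or.inl hv, fun _ => le_rfl⟩

end Encoding

section Stabilization

variable {Q L : Type} [Fintype Q] [DecidableEq Q] (Tr : L → IOTrans Q → L)

lemma TBounded_mono : Monotone (TBounded (L := L) Tr) := fun _ _ hjk =>
  Set.biUnion_subset_biUnion_left fun _ hw => le_trans hw hjk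

lemma TBounded_succ (k : ℕ) :
    TBounded Tr (k + 1) = Teps ∪ ⋃ t, setProd (Tset Tr t) (TBounded Tr k) := by
  ext tf
  simp only [TBounded, setProd, Set.mem_union, Set.mem_iUnion]
  constructor
  · rintro ⟨_ | ⟨t, w⟩, hw, htf⟩
    · exact Or.inl htf
    · simp only [Tword, setProd, Set.mem_iUnion] at htf
      obtain ⟨t1, ht1, t2, ht2, hprod⟩ := htf
      exact Or.inr ⟨t, t1, ht1, t2, ⟨w, Nat.le_of_succ_le_succ hw, ht2⟩, hprod⟩
  · rintro (htf | ⟨t, t1, ht1, t2, ⟨w, hw, ht2⟩, hprod⟩)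
    · exact ⟨[], Nat.zero_le _, htf⟩
    · refine ⟨t :: w, Nat.succ_le_succ hw, ?_⟩
      simp only [Tword, setProd, Set.mem_iUnion]
      exact ⟨t1, ht1, t2, ht2, hprod⟩

lemma TBounded_eq_of_succ_eq {k : ℕ} (hk : TBounded Tr (k + 1) = TBounded Tr k) :
    ∀ j, k ≤ j → TBounded Tr j = TBounded Tr k := by
  intro j hj
  induction j, hj using Nat.le_induction with
  | base => rfl
  | succ j _ ih => rw [TBounded_succ, ih, ← TBounded_succ, hk]

lemma TStar_eq_of_TBounded_succ_eq {k : ℕ} (hk : TBounded Tr (k + 1) = TBounded Tr k) :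
    TStar Tr = TBounded Tr k := by
  refine subset_antisymm (Set.iUnion_subset fun w tf htf => ?_)
    (Set.iUnion₂_subset fun w _ => Set.subset_iUnion (Tword Tr) w)
  rw [← TBounded_eq_of_succ_eq Tr hk (max k w.length) (le_max_left _ _)]
  exact Set.mem_biUnion (le_max_right k w.length) htf

end Stabilization

/-- If the descending chain `(D_k)` stabilizes at step `k`, i.e.
`D_{k+1} = D_k`, then `T(Δ^*) = T(Δ^{≤k})`: the transfer flows of all
transition sequences are already captured by sequences of length at most `k`. -/
theorem TStar_eq_of_Dset_stabilizes {Q L : Type} [Fintype Q] [Fintype L]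
    [DecidableEq Q]
    (θ : L × L × (Q → Q → Bool) → ℕ)
    (hθ : Set.BijOn θ Set.univ (Set.Icc 1 (Ncard Q L)))
    (Tr : L → IOTrans Q → L) (k : ℕ)
    (hstab : Dset (Ncard Q L) θ Tr (k + 1) = Dset (Ncard Q L) θ Tr k) :
    TStar Tr = TBounded Tr k := by
  have hU : Uset (Ncard Q L) θ Tr (k + 1) = Uset (Ncard Q L) θ Tr k := compl_injective hstab
  have hsucc : TBounded Tr (k + 1) ⊆ TBounded Tr k :=
    subset_of_chiSet_subset_upClosure (fun x => hθ.mapsTo (Set.mem_univ x))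
      (Set.injOn_univ.mp hθ.injOn) (TBounded_upwardClosed Tr k)
      (hU ▸ chiSet_subset_Uset Tr (k + 1) : _ ⊆ Uset _ θ Tr k)
  exact TStar_eq_of_TBounded_succ_eq Tr (hsucc.antisymm (TBounded_mono Tr k.le_succ))
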